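/- arXiv:1501.07588 — 2 statements merged into one kernel-verified Lean document; each statement's English description precedes it below -/
import Mathlib

section
/- Let w ∈ ^{δ(J)}W and let (J_n, w_n)_{n≥0} be the associated sequences. Then for every n ≥ 0 we have w_n ∈ ^{δ(J_n)}W^{J_n}, and for every n ≥ 1 we have w_n ∈ w_{n−1} W_{J_{n−1}}. -/
/-!
The key tool is the strong exchange condition, proved via Tits' sign representation: letting
`s i` act on `W × ℤˣ` by `(x, ε) ↦ (s i * x * s i, ±ε)`, with the sign flipped exactly when
`x = s i`, respects the braid relations, and reading off signs shows that every left inversion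
`t` of `π ω` lies in the left inversion sequence of `ω`, so `t * π ω` deletes a letter of `ω`.

With exchange, if `d` has minimal length in `W_K d W_L`, every element of `W_K d W_L` factors as
`a * d * b` with `ℓ (a * d * b) = ℓ a + ℓ d + ℓ b`: multiply by simple reflections of `K` on the
left; a letter deleted from `d` would contradict minimality, and one deleted from `b` leaves
`b` in `W_L`. So `w_n` is reduced on both sides, and `w_{n+1}`, which lies in
`W_{δ(J)} w_n W_{J_n}` and is left `δ(J)`-reduced, has trivial left factor.
-/

namespace CoxeterSystem

open List

variable {B W : Type*} [Group W] {M : CoxeterMatrix B} (cs : CoxeterSystem M W)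

local prefix:100 "s " => cs.simple
local prefix:100 "π " => cs.wordProd
local prefix:100 "ℓ " => cs.length
local prefix:100 "lis " => cs.leftInvSeq

theorem simple_mul_mul_simple_eq_simple_iff {i : B} {x : W} : s i * x * s i = s i ↔ x = s i := by
  constructor
  · intro h
    simpa [mul_assoc] using congrArg (fun y => s i * y * s i) h
  · rintro rfl
    simp

theorem alternatingWord_two_mul_succ (i i' : B) (m : ℕ) :
    alternatingWord i i' (2 * (m + 1)) = i :: i' :: alternatingWord i i' (2 * m) := by
  rw [show 2 * (m + 1) = 2 * m + 1 + 1 by ring, alternatingWord_succ', alternatingWord_succ']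
  simp [parity_simps]

theorem prod_map_alternatingWord {G : Type*} [Monoid G] (f : B → G) (i i' : B) (m : ℕ) :
    ((alternatingWord i i' (2 * m)).map f).prod = (f i * f i') ^ m := by
  induction m with
  | zero => simp [alternatingWord]
  | succ m ih => simp [alternatingWord_two_mul_succ, ih, pow_succ', mul_assoc]

section Tits

open scoped Classical

/-- Acting on all of `W` rather than on the set of reflections avoids a subtype. -/
noncomputable def titsPerm (i : B) : Equiv.Perm (W × ℤˣ) :=
  Function.Involutive.toPerm (fun p => (s i * p.1 * s i, if p.1 = s i then -p.2 else p.2)) <| by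
    rintro ⟨x, ε⟩
    simp only [simple_mul_mul_simple_eq_simple_iff]
    split_ifs <;> simp [mul_assoc]

theorem titsPerm_apply (i : B) (x : W) (ε : ℤˣ) :
    cs.titsPerm i (x, ε) = (s i * x * s i, if x = s i then -ε else ε) := rfl

theorem prod_map_titsPerm_apply (ω : List B) (x : W) (ε : ℤˣ) :
    (ω.map cs.titsPerm).prod (x, ε) =
      (π ω * x * (π ω)⁻¹, (-1) ^ (lis ω).count (π ω * x * (π ω)⁻¹) * ε) := by
  induction ω with
  | nil => simp
  | cons i ω ih =>
    have hconj : MulAut.conj (s i) (π ω * x * (π ω)⁻¹) = π (i :: ω) * x * (π (i :: ω))⁻¹ := by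
      simp [wordProd_cons, mul_assoc]
    rw [map_cons, prod_cons, Equiv.Perm.mul_apply, ih, titsPerm_apply, leftInvSeq, count_cons,
      ← hconj, count_map_of_injective _ _ (MulAut.conj (s i)).injective]
    refine Prod.ext (by simp [mul_assoc]) ?_
    simp only [MulAut.conj_apply, inv_simple, simple_mul_mul_simple_eq_simple_iff, beq_iff_eq,
      eq_comm (a := s i)]
    split_ifs <;> simp [pow_succ]

theorem even_count_leftInvSeq_braid (i i' : B) (t : W) :
    Even ((lis (alternatingWord i i' (2 * M i i'))).count t) := by
  set L := lis (alternatingWord i i' (2 * M i i'))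
  have hperiod : L.drop (M i i') = L.take (M i i') := by
    refine ext_getElem (by simp [L]; omega) fun k _ h₂ => ?_
    simp only [L, length_take, length_leftInvSeq, length_alternatingWord] at h₂
    simp only [getElem_drop, getElem_take, L,
      cs.getElem_leftInvSeq_alternatingWord i i' _ _ (by omega : M i i' + k < 2 * M i i'),
      cs.getElem_leftInvSeq_alternatingWord i i' _ _ (by omega : k < 2 * M i i'),
      prod_alternatingWord_eq_mul_pow]
    rw [show (2 * (M i i' + k) + 1) / 2 = M i i' + k by omega,
      show (2 * k + 1) / 2 = k by omega, pow_add, simple_mul_simple_pow', one_mul]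
    simp [parity_simps]
  rw [← take_append_drop (M i i') L, count_append, hperiod]
  exact ⟨_, rfl⟩

theorem isLiftable_titsPerm : M.IsLiftable cs.titsPerm := by
  intro i i'
  ext ⟨x, ε⟩ : 1
  rw [← prod_map_alternatingWord, prod_map_titsPerm_apply,
    (even_count_leftInvSeq_braid cs i i' _).neg_one_pow]
  simp [prod_alternatingWord_eq_mul_pow]

noncomputable def tits : W →* Equiv.Perm (W × ℤˣ) :=
  cs.lift ⟨cs.titsPerm, cs.isLiftable_titsPerm⟩

theorem tits_simple (i : B) : cs.tits (s i) = cs.titsPerm i :=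
  cs.lift_apply_simple cs.isLiftable_titsPerm i

theorem tits_wordProd_apply (ω : List B) (x : W) (ε : ℤˣ) :
    cs.tits (π ω) (x, ε) =
      (π ω * x * (π ω)⁻¹, (-1) ^ (lis ω).count (π ω * x * (π ω)⁻¹) * ε) := by
  rw [← prod_map_titsPerm_apply, wordProd, map_list_prod, map_map]
  congr 3
  exact funext cs.tits_simple

theorem exists_tits_apply (w x : W) :
    ∃ σ : ℤˣ, ∀ ε, cs.tits w (x, ε) = (w * x * w⁻¹, σ * ε) := by
  obtain ⟨ω, rfl⟩ := cs.wordProd_surjective w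
  exact ⟨_, cs.tits_wordProd_apply ω x⟩

theorem tits_apply_self_of_isReflection {t : W} (ht : cs.IsReflection t) (ε : ℤˣ) :
    cs.tits t (t, ε) = (t, -ε) := by
  obtain ⟨v, i, rfl⟩ := ht
  obtain ⟨σ, hσ⟩ := cs.exists_tits_apply v⁻¹ (v * s i * v⁻¹)
  have hback (ε : ℤˣ) : cs.tits v (s i, σ * ε) = (v * s i * v⁻¹, ε) := by
    have := congrArg (cs.tits v) (hσ ε)
    rwa [← Equiv.Perm.mul_apply, ← map_mul, mul_inv_cancel, map_one, Equiv.Perm.one_apply,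
      show v⁻¹ * (v * s i * v⁻¹) * v⁻¹⁻¹ = s i by group, eq_comm] at this
  rw [map_mul, map_mul, Equiv.Perm.mul_apply, Equiv.Perm.mul_apply, hσ,
    show v⁻¹ * (v * s i * v⁻¹) * v⁻¹⁻¹ = s i by group, tits_simple, titsPerm_apply, if_pos rfl,
    simple_mul_simple_self, one_mul, ← mul_neg, hback]

theorem mem_leftInvSeq_of_isLeftInversion (ω : List B) {t : W}
    (ht : cs.IsLeftInversion (π ω) t) : t ∈ lis ω := by
  -- Compute the sign of `tits (π ω)` at `x` along `ω`, and along `π ω = t * π ρ` with `ρ` a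
  -- reduced word not containing `t` in its inversion sequence: the latter gives `-1`.
  obtain ⟨ρ, hρ, hρω⟩ := cs.exists_isReduced (t * π ω)
  have htt : t * t = 1 := ht.1.mul_self
  have hωρ : π ω = t * π ρ := by rw [← hρω, ← mul_assoc, htt, one_mul]
  have hρt : t ∉ lis ρ := fun h => by
    have := (cs.isLeftInversion_of_mem_leftInvSeq hρ h).2
    rw [← hρω, ← mul_assoc, htt, one_mul] at this
    exact (lt_asymm ht.2 this).elim
  set x := (π ρ)⁻¹ * t * π ρ
  have hxω : π ω * x * (π ω)⁻¹ = t := by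
    simp only [x, hωρ, mul_inv_rev, ht.1.inv, mul_assoc, mul_inv_cancel_left, mul_one, htt]
  have hxρ : π ρ * x * (π ρ)⁻¹ = t := by simp [x, mul_assoc]
  have hsign : cs.tits (π ω) (x, 1) = (t, -1) := by
    rw [hωρ, map_mul, Equiv.Perm.mul_apply, tits_wordProd_apply, hxρ, count_eq_zero.mpr hρt,
      pow_zero, one_mul, tits_apply_self_of_isReflection cs ht.1]
  rw [tits_wordProd_apply, hxω, mul_one, Prod.mk.injEq] at hsign
  refine count_pos_iff.mp (Nat.pos_of_ne_zero fun h => ?_)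
  rw [h, pow_zero] at hsign
  exact absurd hsign.2 (by decide)

theorem exists_eraseIdx_of_isLeftInversion (ω : List B) {t : W}
    (ht : cs.IsLeftInversion (π ω) t) : ∃ j < ω.length, t * π ω = π (ω.eraseIdx j) := by
  obtain ⟨j, hj, rfl⟩ := getElem_of_mem (cs.mem_leftInvSeq_of_isLeftInversion ω ht)
  rw [length_leftInvSeq] at hj
  exact ⟨j, hj, by rw [← getD_leftInvSeq_mul_wordProd, getD_eq_getElem]⟩

end Tits

theorem length_mul_lt_or_length_conj_mul_lt {t u v : W} (ht : cs.IsLeftInversion (u * v) t) :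
    ℓ (t * u) < ℓ u ∨ ℓ (u⁻¹ * t * u * v) < ℓ v := by
  obtain ⟨κ, hκ, rfl⟩ := cs.exists_isReduced u
  obtain ⟨β, hβ, rfl⟩ := cs.exists_isReduced v
  rw [← wordProd_append] at ht
  obtain ⟨j, hj, hdel⟩ := cs.exists_eraseIdx_of_isLeftInversion _ ht
  rw [wordProd_append] at hdel
  by_cases hjκ : j < κ.length
  · left
    rw [eraseIdx_append_of_lt_length hjκ, wordProd_append, ← mul_assoc, mul_left_inj] at hdel
    have := cs.length_wordProd_le (κ.eraseIdx j)
    rw [← hdel, length_eraseIdx_of_lt hjκ] at this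
    rw [hκ.eq]
    omega
  · right
    rw [not_lt] at hjκ
    rw [eraseIdx_append_of_length_le hjκ, wordProd_append] at hdel
    have := cs.length_wordProd_le (β.eraseIdx (j - κ.length))
    rw [length_append] at hj
    rw [length_eraseIdx_of_lt (by omega)] at this
    rw [show (π κ)⁻¹ * t * π κ * π β = π (β.eraseIdx (j - κ.length)) by
      rw [mul_assoc, mul_assoc, hdel, inv_mul_cancel_left], hβ.eq]
    omega

theorem length_simple_mul_le (i : B) (w : W) : ℓ (s i * w) ≤ ℓ w + 1 := by
  rcases cs.length_simple_mul w i with h | h <;> omega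

theorem length_mul_mul_le (a d b : W) : ℓ (a * d * b) ≤ ℓ a + ℓ d + ℓ b :=
  (cs.length_mul_le _ _).trans (by have := cs.length_mul_le a d; omega)

variable {K L : Set W}

theorem closure_induction_simple_mul (hK : K ⊆ Set.range cs.simple) {p : W → Prop} (one : p 1)
    (simple_mul : ∀ i, s i ∈ K → ∀ w ∈ Subgroup.closure K, p w → p (s i * w)) {w : W}
    (hw : w ∈ Subgroup.closure K) : p w := by
  induction hw using Subgroup.closure_induction_left with
  | one => exact one
  | mul_left x hx w hw ih =>
    obtain ⟨i, rfl⟩ := hK hx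
    exact simple_mul i hx w hw ih
  | inv_mul_cancel x hx w hw ih =>
    obtain ⟨i, rfl⟩ := hK hx
    rw [inv_simple]
    exact simple_mul i hx w hw ih

theorem mem_closure_of_isLeftInversion (hK : K ⊆ Set.range cs.simple) {w t : W}
    (hw : w ∈ Subgroup.closure K) (ht : cs.IsLeftInversion w t) : t ∈ Subgroup.closure K := by
  refine cs.closure_induction_simple_mul hK
    (p := fun w => ∀ t, cs.IsLeftInversion w t → t ∈ Subgroup.closure K)
    (fun t ht => absurd ht.2 (by simp)) (fun i hi w _ ih t ht => ?_) hw t ht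
  have hsi : s i ∈ Subgroup.closure K := Subgroup.subset_closure hi
  -- a left inversion of `s i * w` is `s i` or the `s i`-conjugate of a left inversion of `w`
  suffices t = s i ∨ ℓ (s i * t * s i * w) < ℓ w by
    rcases this with rfl | hlt
    · exact hsi
    · have := Subgroup.mul_mem _ (Subgroup.mul_mem _ hsi (ih _ ⟨ht.1.conj (s i), by
        simpa [inv_simple, mul_assoc] using hlt⟩)) hsi
      simpa [mul_assoc] using this
  rcases cs.length_mul_lt_or_length_conj_mul_lt ht with h | h
  · left
    rwa [length_simple, Nat.lt_one_iff, length_eq_zero_iff, mul_eq_one_iff_eq_inv,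
      inv_simple] at h
  · right
    simpa [inv_simple] using h

theorem length_mul_eq_add_of_forall_length_le_left (hK : K ⊆ Set.range cs.simple) {d a : W}
    (hd : ∀ c ∈ Subgroup.closure K, ℓ d ≤ ℓ (c * d)) (ha : a ∈ Subgroup.closure K) :
    ℓ (a * d) = ℓ a + ℓ d := by
  refine cs.closure_induction_simple_mul hK (p := fun a => ℓ (a * d) = ℓ a + ℓ d) (by simp)
    (fun i hi a ha ih => ?_) ha
  have hsa := cs.length_simple_mul_le i a
  have htri := cs.length_mul_le (s i * a) d
  rcases cs.length_simple_mul (a * d) i with hup | hdown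
  · rw [← mul_assoc] at hup
    omega
  · rcases cs.length_mul_lt_or_length_conj_mul_lt (u := a) (v := d)
      ⟨cs.isReflection_simple i, by omega⟩ with h | h
    · rw [← mul_assoc] at hdown
      rcases cs.length_simple_mul a i with h' | h' <;> omega
    · have hc : a⁻¹ * s i * a ∈ Subgroup.closure K :=
        Subgroup.mul_mem _ (Subgroup.mul_mem _ (Subgroup.inv_mem _ ha)
          (Subgroup.subset_closure hi)) ha
      exact absurd (hd _ hc) (not_le.mpr h)

theorem length_mul_eq_add_of_forall_length_le_right (hK : K ⊆ Set.range cs.simple) {d b : W}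
    (hd : ∀ c ∈ Subgroup.closure K, ℓ d ≤ ℓ (d * c)) (hb : b ∈ Subgroup.closure K) :
    ℓ (d * b) = ℓ d + ℓ b := by
  have hd' : ∀ c ∈ Subgroup.closure K, ℓ d⁻¹ ≤ ℓ (c * d⁻¹) := fun c hc => by
    simpa [← length_inv cs (c * d⁻¹)] using hd c⁻¹ (Subgroup.inv_mem _ hc)
  simpa [add_comm, ← length_inv cs (d * b)] using
    cs.length_mul_eq_add_of_forall_length_le_left hK hd' (Subgroup.inv_mem _ hb)

theorem length_mul_lt_or_exists_of_isLeftInversion (hL : L ⊆ Set.range cs.simple)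
    {d a b t : W} (hd : ∀ c ∈ Subgroup.closure K, ℓ d ≤ ℓ (c * d)) (ha : a ∈ Subgroup.closure K)
    (hb : b ∈ Subgroup.closure L) (htK : t ∈ Subgroup.closure K)
    (ht : cs.IsLeftInversion (a * d * b) t) :
    ℓ (t * a) < ℓ a ∨ ∃ b' ∈ Subgroup.closure L, t * (a * d * b) = a * d * b' ∧ ℓ b' < ℓ b := by
  rw [mul_assoc] at ht
  refine (cs.length_mul_lt_or_length_conj_mul_lt ht).imp_right fun h => ?_
  set c := a⁻¹ * t * a
  have hcK : c ∈ Subgroup.closure K :=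
    Subgroup.mul_mem _ (Subgroup.mul_mem _ (Subgroup.inv_mem _ ha) htK) ha
  have hc : cs.IsLeftInversion (d * b) c :=
    ⟨by simpa using ht.1.conj a⁻¹, by simpa [mul_assoc] using h⟩
  rcases cs.length_mul_lt_or_length_conj_mul_lt hc with h' | h'
  · exact absurd (hd c hcK) (not_le.mpr h')
  · have hb' := cs.mem_closure_of_isLeftInversion hL hb ⟨by simpa using hc.1.conj d⁻¹, h'⟩
    refine ⟨_, Subgroup.mul_mem _ hb' hb, ?_, h'⟩
    simp only [c]
    group

theorem exists_mul_mul_eq_and_length_eq (hK : K ⊆ Set.range cs.simple)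
    (hL : L ⊆ Set.range cs.simple)
    {d a b : W} (hd : ∀ a ∈ Subgroup.closure K, ∀ b ∈ Subgroup.closure L, ℓ d ≤ ℓ (a * d * b))
    (ha : a ∈ Subgroup.closure K) (hb : b ∈ Subgroup.closure L) :
    ∃ a' ∈ Subgroup.closure K, ∃ b' ∈ Subgroup.closure L,
      a * d * b = a' * d * b' ∧ ℓ (a * d * b) = ℓ a' + ℓ d + ℓ b' := by
  have hdK : ∀ c ∈ Subgroup.closure K, ℓ d ≤ ℓ (c * d) := fun c hc => by
    simpa using hd c hc 1 (Subgroup.one_mem _)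
  have hdL : ℓ (d * b) = ℓ d + ℓ b := cs.length_mul_eq_add_of_forall_length_le_right hL
    (fun c hc => by simpa using hd 1 (Subgroup.one_mem _) c hc) hb
  refine cs.closure_induction_simple_mul hK
    (p := fun a => ∃ a' ∈ Subgroup.closure K, ∃ b' ∈ Subgroup.closure L,
      a * d * b = a' * d * b' ∧ ℓ (a * d * b) = ℓ a' + ℓ d + ℓ b')
    ⟨1, Subgroup.one_mem _, b, hb, rfl, by simpa [mul_assoc] using hdL⟩ ?_ ha
  rintro i hi a - ⟨a', ha', b', hb', heq, hlen⟩
  have hsi : s i ∈ Subgroup.closure K := Subgroup.subset_closure hi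
  rw [heq] at hlen
  rw [show s i * a * d * b = s i * (a' * d * b') by rw [← heq]; group]
  have hleft (h : ℓ (s i * a') + ℓ d + ℓ b' ≤ ℓ (s i * (a' * d * b'))) :
      ∃ a'' ∈ Subgroup.closure K, ∃ b'' ∈ Subgroup.closure L, s i * (a' * d * b') = a'' * d * b'' ∧
        ℓ (s i * (a' * d * b')) = ℓ a'' + ℓ d + ℓ b'' :=
    ⟨s i * a', Subgroup.mul_mem _ hsi ha', b', hb', by group,
      le_antisymm (by simpa [mul_assoc] using cs.length_mul_mul_le (s i * a') d b') h⟩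
  rcases cs.length_simple_mul (a' * d * b') i with hup | hdown
  · have := cs.length_simple_mul_le i a'
    exact hleft (by omega)
  rcases cs.length_mul_lt_or_exists_of_isLeftInversion hL hdK ha' hb' hsi
    ⟨cs.isReflection_simple i, by omega⟩ with h | ⟨b'', hb'', heq', hlt⟩
  · rcases cs.length_simple_mul a' i with h' | h'
    · omega
    · exact hleft (by omega)
  · have := cs.length_mul_mul_le a' d b''
    exact ⟨a', ha', b'', hb'', heq', by rw [heq'] at hdown ⊢; omega⟩

theorem exists_eq_mul_of_length_mul_eq_add (hK : K ⊆ Set.range cs.simple)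
    (hL : L ⊆ Set.range cs.simple) {d x : W}
    (hd : ∀ a ∈ Subgroup.closure K, ∀ b ∈ Subgroup.closure L, ℓ d ≤ ℓ (a * d * b))
    (hx : ∃ a ∈ Subgroup.closure K, ∃ b ∈ Subgroup.closure L, x = a * d * b)
    (hxK : ∀ a ∈ Subgroup.closure K, ℓ (a * x) = ℓ a + ℓ x) :
    ∃ b ∈ Subgroup.closure L, x = d * b := by
  obtain ⟨a, ha, b, hb, rfl⟩ := hx
  obtain ⟨a', ha', b', hb', heq, hlen⟩ := cs.exists_mul_mul_eq_and_length_eq hK hL hd ha hb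
  have hcancel : a'⁻¹ * (a * d * b) = d * b' := by rw [heq]; group
  have hlen' := hxK a'⁻¹ (Subgroup.inv_mem _ ha')
  rw [hcancel, length_inv] at hlen'
  have := cs.length_mul_le d b'
  have ha'1 : a' = 1 := cs.length_eq_zero_iff.mp (by omega)
  exact ⟨b', hb', by rw [heq, ha'1, one_mul]⟩

end CoxeterSystem

theorem bedard_sequences_minimal_coset_properties_general
    {B W : Type*} [Group W] {M : CoxeterMatrix B}
    (cs : CoxeterSystem M W) (δ : W ≃* W)
    (hδ : ⇑δ '' Set.range cs.simple = Set.range cs.simple)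
    (J : Set W) (hJ : J ⊆ Set.range cs.simple)
    (w : W)
    (Jn : ℕ → Set W) (wn : ℕ → W)
    (hJ0 : Jn 0 = J)
    (hJrec : ∀ n : ℕ,
      Jn (n + 1) = Jn n ∩ ⇑δ.symm '' {x : W | ∃ s ∈ Jn n, x = wn n * s * (wn n)⁻¹})
    (hwn : ∀ n : ℕ,
      wn n ∈ {x : W | ∃ a ∈ Subgroup.closure (⇑δ '' J),
        ∃ b ∈ Subgroup.closure (Jn n), x = a * w * b} ∧
      ∀ x ∈ {x : W | ∃ a ∈ Subgroup.closure (⇑δ '' J),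
        ∃ b ∈ Subgroup.closure (Jn n), x = a * w * b},
        cs.length (wn n) ≤ cs.length x) :
    (∀ n : ℕ,
      (∀ a ∈ Subgroup.closure (⇑δ '' Jn n),
        cs.length (a * wn n) = cs.length a + cs.length (wn n)) ∧
      (∀ a ∈ Subgroup.closure (Jn n),
        cs.length (wn n * a) = cs.length (wn n) + cs.length a)) ∧
    (∀ n : ℕ, ∃ b ∈ Subgroup.closure (Jn n), wn (n + 1) = wn n * b) := by
  have hK : ⇑δ '' J ⊆ Set.range cs.simple := hδ ▸ Set.image_mono hJ
  have hJn_succ (n : ℕ) : Jn (n + 1) ⊆ Jn n := hJrec n ▸ Set.inter_subset_left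
  have hJnJ (n : ℕ) : Jn n ⊆ J := by
    induction n with
    | zero => exact hJ0.subset
    | succ n ih => exact (hJn_succ n).trans ih
  have hJn (n : ℕ) : Jn n ⊆ Set.range cs.simple := (hJnJ n).trans hJ
  have hmin (n : ℕ) : ∀ a ∈ Subgroup.closure (⇑δ '' J), ∀ b ∈ Subgroup.closure (Jn n),
      cs.length (wn n) ≤ cs.length (a * wn n * b) := fun a ha b hb => by
    obtain ⟨a₀, ha₀, b₀, hb₀, h₀⟩ := (hwn n).1
    exact (hwn n).2 _ ⟨a * a₀, Subgroup.mul_mem _ ha ha₀, b₀ * b, Subgroup.mul_mem _ hb₀ hb,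
      by rw [h₀]; group⟩
  have hleft (n : ℕ) : ∀ a ∈ Subgroup.closure (⇑δ '' J),
      cs.length (a * wn n) = cs.length a + cs.length (wn n) := fun a ha =>
    cs.length_mul_eq_add_of_forall_length_le_left hK
      (fun c hc => by simpa using hmin n c hc 1 (Subgroup.one_mem _)) ha
  refine ⟨fun n => ⟨fun a ha => hleft n a (Subgroup.closure_mono (Set.image_mono (hJnJ n)) ha),
    fun b hb => cs.length_mul_eq_add_of_forall_length_le_right (hJn n)
      (fun c hc => by simpa using hmin n 1 (Subgroup.one_mem _) c hc) hb⟩, fun n => ?_⟩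
  refine cs.exists_eq_mul_of_length_mul_eq_add hK (hJn n) (hmin n) ?_ (hleft (n + 1))
  obtain ⟨a₁, ha₁, b₁, hb₁, h₁⟩ := (hwn (n + 1)).1
  obtain ⟨a₀, ha₀, b₀, hb₀, h₀⟩ := (hwn n).1
  exact ⟨a₁ * a₀⁻¹, Subgroup.mul_mem _ ha₁ (Subgroup.inv_mem _ ha₀),
    b₀⁻¹ * b₁, Subgroup.mul_mem _ (Subgroup.inv_mem _ hb₀) (Subgroup.closure_mono (hJn_succ n) hb₁),
    by rw [h₁, h₀]; group⟩

theorem bedard_sequences_minimal_coset_properties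
    {B W : Type*} [Finite B] [Group W] {M : CoxeterMatrix B}
    (cs : CoxeterSystem M W) (δ : W ≃* W)
    (hδ : ⇑δ '' Set.range cs.simple = Set.range cs.simple)
    (J : Set W) (hJ : J ⊆ Set.range cs.simple)
    (w : W)
    (hw : ∀ a ∈ Subgroup.closure (⇑δ '' J),
      cs.length (a * w) = cs.length a + cs.length w)
    (Jn : ℕ → Set W) (wn : ℕ → W)
    (hJ0 : Jn 0 = J)
    (hJrec : ∀ n : ℕ,
      Jn (n + 1) = Jn n ∩ ⇑δ.symm '' {x : W | ∃ s ∈ Jn n, x = wn n * s * (wn n)⁻¹})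
    (hwn : ∀ n : ℕ,
      wn n ∈ {x : W | ∃ a ∈ Subgroup.closure (⇑δ '' J),
        ∃ b ∈ Subgroup.closure (Jn n), x = a * w * b} ∧
      ∀ x ∈ {x : W | ∃ a ∈ Subgroup.closure (⇑δ '' J),
        ∃ b ∈ Subgroup.closure (Jn n), x = a * w * b},
        cs.length (wn n) ≤ cs.length x) :
    (∀ n : ℕ,
      (∀ a ∈ Subgroup.closure (⇑δ '' Jn n),
        cs.length (a * wn n) = cs.length a + cs.length (wn n)) ∧
      (∀ a ∈ Subgroup.closure (Jn n),
        cs.length (wn n * a) = cs.length (wn n) + cs.length a)) ∧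
    (∀ n : ℕ, ∃ b ∈ Subgroup.closure (Jn n), wn (n + 1) = wn n * b) :=
  bedard_sequences_minimal_coset_properties_general cs δ hδ J hJ w Jn wn hJ0 hJrec hwn
end

section
/- Let T(J,δ) be the set of all sequences (J'_n, w'_n)_{n≥0}, with J'_n ⊆ S and w'_n ∈ W, such that J'_0 = J, J'_n = J'_{n−1} ∩ δ⁻¹(w'_{n−1} J'_{n−1} (w'_{n−1})⁻¹) for n ≥ 1, w'_n ∈ ^{δ(J'_n)}W^{J'_n} for n ≥ 0, and w'_n ∈ w'_{n−1} W_{J'_{n−1}} for n ≥ 1. Then for every element of T(J,δ) the sequence (w'_n) is eventually constant, with stable value denoted w'_∞, and the map κ : w ↦ (J_n, w_n)_{n≥0} is a bijection from ^{δ(J)}W onto T(J,δ) whose inverse is (J'_n, w'_n)_{n≥0} ↦ w'_∞. -/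
/-!
Everything rests on the strong exchange condition, obtained from Tits' sign representation
`reflRep` of `W` on `W × ℤˣ`: its cocycle `reflCocycle w t` is `(-1)^k`, where `k` is the number
of occurrences of `t` in the right inversion sequence of any word for `w`, and it is `-1` exactly
when the reflection `t` is a right inversion of `w`.

The sets `J_n` decrease inside the finite set `J`, hence stabilise at some `K = J_N`; stability
means `δ(K) = w_N K w_N⁻¹`, so conjugation by `w_N` carries `W_K` into `W_{δ(J)}`; writing
`u = w_N b` with `b ∈ W_K`, the element `w_N b⁻¹ w_N⁻¹ ∈ W_{δ(J)}` sends `u` to `w_N`, which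
`u ∈ ^{δ(J)}W` allows only for `b = 1`. Conversely, for `(J'_n, w'_n) ∈ T(J,δ)` Deodhar's lemma gives `w'_n ∈ ^{δ(J'_m)}W` for
all `m ≤ n` by downward induction on `m`. For `m = 0` this places `w'_n` in `^{δ(J)}W^{J'_n}`,
where it is the unique element of its double coset, so the sequence is the one attached to its
stable value.
-/

/-- The set `T(J,δ)` of admissible pairs of sequences `(J'_n, w'_n)_{n ≥ 0}`. -/
def bedardT {B W : Type*} [Group W] {M : CoxeterMatrix B}
    (cs : CoxeterSystem M W) (δ : W ≃* W) (J : Set W) :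
    Set ((ℕ → Set W) × (ℕ → W)) :=
  {p | p.1 0 = J ∧
    (∀ n : ℕ,
      p.1 (n + 1) = p.1 n ∩ ⇑δ.symm '' {x : W | ∃ s ∈ p.1 n, x = p.2 n * s * (p.2 n)⁻¹}) ∧
    (∀ n : ℕ,
      (∀ a ∈ Subgroup.closure (⇑δ '' p.1 n),
        cs.length (a * p.2 n) = cs.length a + cs.length (p.2 n)) ∧
      (∀ a ∈ Subgroup.closure (p.1 n),
        cs.length (p.2 n * a) = cs.length (p.2 n) + cs.length a)) ∧
    (∀ n : ℕ, ∃ b ∈ Subgroup.closure (p.1 n), p.2 (n + 1) = p.2 n * b)}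

theorem Set.Finite.exists_eq_of_antitone {α : Type*} {A : ℕ → Set α} (h0 : (A 0).Finite)
    (hA : Antitone A) : ∃ N, ∀ n ≥ N, A n = A N := by
  have := h0.to_subtype
  obtain ⟨N, hN⟩ := WellFoundedLT.antitone_chain_condition
    (f := fun n ↦ ((↑) ⁻¹' A n : Set (A 0))) fun m n hmn ↦ Set.preimage_mono (hA hmn)
  refine ⟨N, fun n hn ↦ ?_⟩
  have := congrArg (Set.image ((↑) : A 0 → α)) (hN n hn)
  simp only [Subtype.image_preimage_coe, Set.inter_eq_right.2 (hA (Nat.zero_le _))] at this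
  exact this.symm

noncomputable section

namespace CoxeterSystem

open List DoubleCoset

variable {B W : Type*} [Group W] {M : CoxeterMatrix B} (cs : CoxeterSystem M W)

local prefix:100 "s" => cs.simple
local prefix:100 "π" => cs.wordProd
local prefix:100 "ℓ" => cs.length
local prefix:100 "ris " => cs.rightInvSeq

open Classical in
def signAt (r t : W) : ℤˣ := if t = r then -1 else 1

open Classical in
theorem signAt_conj (g r t : W) : signAt r (g * t * g⁻¹) = signAt (g⁻¹ * r * g) t := by
  have : g * t * g⁻¹ = r ↔ t = g⁻¹ * r * g := by
    constructor <;> rintro rfl <;> group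
  exact if_congr this rfl rfl

theorem signAt_simple_conj (i : B) (r t : W) :
    signAt r (s i * t * s i) = signAt (s i * r * s i) t := by
  simpa only [inv_simple] using signAt_conj (s i) r t

def simplePerm (i : B) : Equiv.Perm (W × ℤˣ) :=
  Function.Involutive.toPerm (fun q ↦ (s i * q.1 * s i, signAt (s i) q.1 * q.2)) fun ⟨t, ε⟩ ↦ by
    simp only [signAt_simple_conj, simple_mul_simple_cancel_right, ← mul_assoc,
      Int.units_mul_self, one_mul, simple_mul_simple_self]

theorem simplePerm_apply (i : B) (t : W) (ε : ℤˣ) :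
    cs.simplePerm i (t, ε) = (s i * t * s i, signAt (s i) t * ε) := rfl

theorem prod_map_simplePerm_apply (ω : List B) (t : W) (ε : ℤˣ) :
    (ω.map cs.simplePerm).prod (t, ε) =
      (π ω * t * (π ω)⁻¹, ((ris ω).map (signAt · t)).prod * ε) := by
  induction ω with
  | nil => simp
  | cons i ω ih =>
    rw [map_cons, prod_cons, Equiv.Perm.mul_apply, ih, simplePerm_apply, signAt_conj]
    simp only [rightInvSeq, wordProd_cons, map_cons, prod_cons, mul_inv_rev, inv_simple, mul_assoc]

theorem simplePerm_mul_pow_apply (i i' : B) (k : ℕ) (t : W) (ε : ℤˣ) :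
    ((cs.simplePerm i * cs.simplePerm i') ^ k) (t, ε) =
      ((s i * s i') ^ k * t * ((s i * s i') ^ k)⁻¹,
        (∏ c ∈ Finset.range (2 * k), signAt ((s i * s i')⁻¹ ^ c * s i') t) * ε) := by
  set p := s i * s i'
  have hp : s i' * p = p⁻¹ * s i' := by simp [p, mul_assoc]
  have hconj (c : ℕ) : p⁻¹ * ((p⁻¹) ^ c * s i') * p = (p⁻¹) ^ (c + 2) * s i' := by
    rw [pow_succ _ (c + 1), pow_succ', mul_assoc, mul_assoc, mul_assoc, hp, mul_assoc]
  induction k generalizing t ε with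
  | zero => simp
  | succ k ih =>
    rw [pow_succ, Equiv.Perm.mul_apply, Equiv.Perm.mul_apply, simplePerm_apply, simplePerm_apply,
      show s i * (s i' * t * s i') * s i = p * t * p⁻¹ by simp [p, mul_assoc],
      ih, show 2 * (k + 1) = 2 * k + 1 + 1 by ring, Finset.prod_range_succ',
      Finset.prod_range_succ']
    refine Prod.ext (by simp [pow_succ, mul_assoc]) ?_
    have h1 : signAt (s i) (s i' * t * s i') = signAt (p⁻¹ ^ 1 * s i') t := by
      rw [signAt_simple_conj]
      simp [p, mul_assoc]
    simp only [signAt_conj, hconj, h1, pow_zero, one_mul]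
    ac_rfl

-- The reflections `(s_i s_i')^{-c} s_i'` met along `(s_i s_i')^m` repeat with period `m`, so
-- every sign occurs twice.
theorem isLiftable_simplePerm : M.IsLiftable cs.simplePerm := by
  intro i i'
  set m := M i i'
  have hp : (s i * s i') ^ m = 1 := cs.simple_mul_simple_pow i i'
  have hperiod (c : ℕ) : (s i * s i')⁻¹ ^ (m + c) = (s i * s i')⁻¹ ^ c := by
    rw [pow_add, inv_pow, hp, inv_one, one_mul]
  ext ⟨t, ε⟩ : 1
  rw [simplePerm_mul_pow_apply, hp, two_mul, Finset.prod_range_add]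
  simp only [hperiod, Int.units_mul_self, one_mul, mul_one, inv_one, Equiv.Perm.one_apply]

def reflRep : W →* Equiv.Perm (W × ℤˣ) := cs.lift ⟨cs.simplePerm, cs.isLiftable_simplePerm⟩

def reflCocycle (w t : W) : ℤˣ := (cs.reflRep w (t, 1)).2

theorem reflRep_wordProd (ω : List B) : cs.reflRep (π ω) = (ω.map cs.simplePerm).prod := by
  rw [wordProd, map_list_prod, map_map]
  congr 2
  ext i : 1
  exact cs.lift_apply_simple cs.isLiftable_simplePerm i

theorem reflCocycle_wordProd (ω : List B) (t : W) :
    cs.reflCocycle (π ω) t = ((ris ω).map (signAt · t)).prod := by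
  rw [reflCocycle, reflRep_wordProd, prod_map_simplePerm_apply, mul_one]

theorem reflRep_apply (w t : W) (ε : ℤˣ) :
    cs.reflRep w (t, ε) = (w * t * w⁻¹, cs.reflCocycle w t * ε) := by
  obtain ⟨ω, rfl⟩ := cs.wordProd_surjective w
  rw [reflCocycle_wordProd, reflRep_wordProd, prod_map_simplePerm_apply]

theorem reflCocycle_mul (u v t : W) :
    cs.reflCocycle (u * v) t = cs.reflCocycle u (v * t * v⁻¹) * cs.reflCocycle v t := by
  rw [reflCocycle, map_mul, Equiv.Perm.mul_apply, reflRep_apply, reflRep_apply, mul_one]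

theorem reflCocycle_one (t : W) : cs.reflCocycle 1 t = 1 := by
  simp [reflCocycle]

theorem reflCocycle_simple_self (i : B) : cs.reflCocycle (s i) (s i) = -1 := by
  rw [← wordProd_singleton, reflCocycle_wordProd]
  simp [signAt]

theorem reflCocycle_self_of_isReflection {t : W} (ht : cs.IsReflection t) :
    cs.reflCocycle t t = -1 := by
  obtain ⟨g, i, rfl⟩ := ht
  have hconj : cs.reflCocycle (g * s i * g⁻¹) (g * s i * g⁻¹) =
      cs.reflCocycle (g * s i) (s i) * cs.reflCocycle g⁻¹ (g * s i * g⁻¹) := by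
    rw [reflCocycle_mul]; group
  have hsimple : cs.reflCocycle (g * s i) (s i) = cs.reflCocycle g (s i) * -1 := by
    rw [reflCocycle_mul, reflCocycle_simple_self]; group
  have hinv : cs.reflCocycle g (s i) * cs.reflCocycle g⁻¹ (g * s i * g⁻¹) = 1 := by
    rw [← reflCocycle_one cs (g * s i * g⁻¹), ← mul_inv_cancel g, reflCocycle_mul]; group
  rw [hconj, hsimple, mul_right_comm, hinv, one_mul]

theorem mem_rightInvSeq_of_reflCocycle_ne_one {ω : List B} {t : W}
    (h : cs.reflCocycle (π ω) t ≠ 1) : t ∈ ris ω := by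
  contrapose! h
  rw [reflCocycle_wordProd]
  refine List.prod_eq_one fun x hx ↦ ?_
  obtain ⟨r, hr, rfl⟩ := mem_map.1 hx
  exact if_neg fun (htr : t = r) ↦ h (htr ▸ hr)

theorem length_mul_lt_of_reflCocycle_ne_one {w t : W} (h : cs.reflCocycle w t ≠ 1) :
    ℓ (w * t) < ℓ w := by
  obtain ⟨ω, hω, rfl⟩ := cs.exists_isReduced w
  exact (cs.isRightInversion_of_mem_rightInvSeq hω (cs.mem_rightInvSeq_of_reflCocycle_ne_one h)).2

theorem reflCocycle_ne_one_iff {w t : W} (ht : cs.IsReflection t) :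
    cs.reflCocycle w t ≠ 1 ↔ cs.IsRightInversion w t := by
  refine ⟨fun h ↦ ⟨ht, cs.length_mul_lt_of_reflCocycle_ne_one h⟩, fun h hw ↦ ?_⟩
  have hwt : cs.reflCocycle (w * t) t ≠ 1 := by
    rw [reflCocycle_mul, mul_assoc, ht.inv, ht.mul_self, mul_one, hw,
      cs.reflCocycle_self_of_isReflection ht]
    decide
  have := cs.length_mul_lt_of_reflCocycle_ne_one hwt
  rw [mul_assoc, ht.mul_self, mul_one] at this
  exact absurd h.2 (not_lt.2 this.le)

theorem mem_rightInvSeq_of_isRightInversion {ω : List B} {t : W}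
    (h : cs.IsRightInversion (π ω) t) : t ∈ ris ω :=
  cs.mem_rightInvSeq_of_reflCocycle_ne_one ((cs.reflCocycle_ne_one_iff h.1).2 h)

theorem exists_eraseIdx_of_isRightDescent {ω : List B} {i : B} (h : cs.IsRightDescent (π ω) i) :
    ∃ j < ω.length, π ω * s i = π (ω.eraseIdx j) := by
  obtain ⟨j, hj, hget⟩ := mem_iff_getElem.1 <|
    cs.mem_rightInvSeq_of_isRightInversion ((cs.isRightInversion_simple_iff_isRightDescent _ i).2 h)
  refine ⟨j, by simpa using hj, ?_⟩
  rw [← hget, ← getD_eq_getElem _ 1, wordProd_mul_getD_rightInvSeq]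

theorem isRightInversion_or_of_isRightInversion_mul {y z t : W}
    (h : cs.IsRightInversion (y * z) t) :
    cs.IsRightInversion z t ∨ cs.IsRightInversion y (z * t * z⁻¹) := by
  have hyz := (cs.reflCocycle_ne_one_iff h.1).2 h
  rw [reflCocycle_mul] at hyz
  by_cases hz : cs.reflCocycle z t = 1
  · rw [hz, mul_one] at hyz
    exact Or.inr ((cs.reflCocycle_ne_one_iff (h.1.conj z)).1 hyz)
  · exact Or.inl ((cs.reflCocycle_ne_one_iff h.1).1 hz)

theorem exists_reduced_sublist (ω : List B) : ∃ ω', ω' <+ ω ∧ cs.IsReduced ω' ∧ π ω' = π ω := by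
  induction ω using List.reverseRecOn with
  | nil => exact ⟨[], Sublist.refl _, by simp [IsReduced], rfl⟩
  | append_singleton ω i ih =>
    obtain ⟨ω', hsub, hred, hπ⟩ := ih
    rcases cs.length_mul_simple (π ω') i with hlen | hlen
    · refine ⟨ω' ++ [i], hsub.append (Sublist.refl _), ?_, by simp [wordProd_append, hπ]⟩
      rw [IsReduced, wordProd_append, wordProd_singleton, hlen, hred.eq, length_append,
        length_singleton]
    · obtain ⟨j, hj, heq⟩ := cs.exists_eraseIdx_of_isRightDescent (cs.isRightDescent_iff.2 hlen)
      refine ⟨ω'.eraseIdx j, (eraseIdx_sublist _ _).trans (hsub.trans (sublist_append_left _ _)),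
        ?_, by rw [← heq, hπ, wordProd_append, wordProd_singleton]⟩
      have := length_eraseIdx_add_one hj
      rw [IsReduced, ← heq]
      have := hred.eq
      omega

variable {K : Set W}

theorem exists_reduced_word_of_mem_closure (hK : K ⊆ Set.range cs.simple) {w : W}
    (hw : w ∈ Subgroup.closure K) :
    ∃ ω : List B, (∀ i ∈ ω, s i ∈ K) ∧ cs.IsReduced ω ∧ w = π ω := by
  obtain ⟨ω, hωK, rfl⟩ : ∃ ω : List B, (∀ i ∈ ω, s i ∈ K) ∧ w = π ω := by
    induction hw using Subgroup.closure_induction with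
    | mem x hx =>
      obtain ⟨i, rfl⟩ := hK hx
      exact ⟨[i], by simpa using hx, by simp⟩
    | one => exact ⟨[], by simp, by simp⟩
    | mul x y _ _ hx hy =>
      obtain ⟨ω₁, h₁, rfl⟩ := hx
      obtain ⟨ω₂, h₂, rfl⟩ := hy
      exact ⟨ω₁ ++ ω₂, fun i hi ↦ (mem_append.1 hi).elim (h₁ i) (h₂ i), by simp [wordProd_append]⟩
    | inv x _ hx =>
      obtain ⟨ω, h, rfl⟩ := hx
      exact ⟨ω.reverse, by simpa using h, by simp⟩
  obtain ⟨ω', hsub, hred, hπ⟩ := cs.exists_reduced_sublist ω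
  exact ⟨ω', fun i hi ↦ hωK i (hsub.subset hi), hred, hπ.symm⟩

theorem exists_isRightDescent_of_mem_closure (hK : K ⊆ Set.range cs.simple) {w : W}
    (hw : w ∈ Subgroup.closure K) (hw1 : w ≠ 1) : ∃ i, s i ∈ K ∧ cs.IsRightDescent w i := by
  obtain ⟨ω, hωK, hred, rfl⟩ := cs.exists_reduced_word_of_mem_closure hK hw
  rcases eq_nil_or_concat ω with rfl | ⟨ω', i, rfl⟩
  · exact absurd cs.wordProd_nil hw1
  · refine ⟨i, hωK i (by simp), ?_⟩
    have hlen := hred.eq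
    have hle := cs.length_wordProd_le ω'
    rw [length_concat] at hlen
    rw [IsRightDescent, wordProd_concat, simple_mul_simple_cancel_right, ← wordProd_concat, hlen]
    omega

theorem mem_closure_of_mem_rightInvSeq {ω : List B} (hω : ∀ i ∈ ω, s i ∈ K) {t : W}
    (ht : t ∈ ris ω) : t ∈ Subgroup.closure K := by
  induction ω with
  | nil => simp at ht
  | cons i ω ih =>
    have hωK : π ω ∈ Subgroup.closure K := by
      refine (Subgroup.closure K).list_prod_mem fun x hx ↦ ?_
      obtain ⟨j, hj, rfl⟩ := mem_map.1 hx
      exact Subgroup.subset_closure (hω j (mem_cons_of_mem i hj))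
    rcases mem_cons.1 ht with rfl | ht
    · exact mul_mem (mul_mem (inv_mem hωK) (Subgroup.subset_closure (hω i mem_cons_self))) hωK
    · exact ih (fun j hj ↦ hω j (mem_cons_of_mem i hj)) ht

theorem mem_closure_of_isRightInversion (hK : K ⊆ Set.range cs.simple) {w t : W}
    (hw : w ∈ Subgroup.closure K) (ht : cs.IsRightInversion w t) : t ∈ Subgroup.closure K := by
  obtain ⟨ω, hωK, -, rfl⟩ := cs.exists_reduced_word_of_mem_closure hK hw
  exact cs.mem_closure_of_mem_rightInvSeq hωK (cs.mem_rightInvSeq_of_isRightInversion ht)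

-- `w ∈ W^K` and `w ∈ ^K W` respectively.
def IsRightMinimal (K : Set W) (w : W) : Prop :=
  ∀ b ∈ Subgroup.closure K, ℓ (w * b) = ℓ w + ℓ b

def IsLeftMinimal (K : Set W) (w : W) : Prop :=
  ∀ a ∈ Subgroup.closure K, ℓ (a * w) = ℓ a + ℓ w

theorem isLeftMinimal_inv_iff {w : W} : cs.IsLeftMinimal K w⁻¹ ↔ cs.IsRightMinimal K w := by
  refine ⟨fun h b hb ↦ ?_, fun h a ha ↦ ?_⟩
  · rw [← length_inv, mul_inv_rev, h _ (inv_mem hb), length_inv, length_inv, add_comm]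
  · rw [← length_inv, mul_inv_rev, inv_inv, h _ (inv_mem ha), length_inv, length_inv, add_comm]

variable {cs} in
theorem IsLeftMinimal.mono {K' : Set W} {w : W} (h : cs.IsLeftMinimal K w) (hK : K' ⊆ K) :
    cs.IsLeftMinimal K' w :=
  fun a ha ↦ h a (Subgroup.closure_mono hK ha)

variable {cs} in
theorem IsRightMinimal.eq_one_of_mul {w b : W} (hw : cs.IsRightMinimal K w)
    (hwb : cs.IsRightMinimal K (w * b)) (hb : b ∈ Subgroup.closure K) : b = 1 := by
  have h₁ := hw b hb
  have h₂ := hwb b⁻¹ (inv_mem hb)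
  rw [mul_inv_cancel_right, length_inv] at h₂
  exact cs.length_eq_zero_iff.1 (by omega)

theorem isRightMinimal_of_forall_length_le (hK : K ⊆ Set.range cs.simple) {w : W}
    (hmin : ∀ b ∈ Subgroup.closure K, ℓ w ≤ ℓ (w * b)) : cs.IsRightMinimal K w := by
  have step (b : W) (hb : b ∈ Subgroup.closure K) (hwb : ℓ (w * b) = ℓ w + ℓ b) (i : B)
      (hi : s i ∈ K) : ℓ (w * (b * s i)) = ℓ w + ℓ (b * s i) := by
    have hle := cs.length_mul_le w (b * s i)
    have hwbi := cs.length_mul_simple (w * b) i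
    rw [← mul_assoc] at hle ⊢
    rcases cs.length_mul_simple b i with hbi | hbi
    · by_contra hne
      rcases cs.isRightInversion_or_of_isRightInversion_mul
        ⟨cs.isReflection_simple i, (by omega : ℓ (w * b * s i) < ℓ (w * b))⟩ with h | h
      · have := h.2
        omega
      · have := hmin _ (mul_mem (mul_mem hb (Subgroup.subset_closure hi)) (inv_mem hb))
        have := h.2
        omega
    · omega
  intro b hb
  induction hb using Subgroup.closure_induction_right with
  | one => simp
  | mul_right b hb y hy ih =>
    obtain ⟨i, rfl⟩ := hK hy
    exact step b hb ih i hy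
  | mul_inv_cancel b hb y hy ih =>
    obtain ⟨i, rfl⟩ := hK hy
    rw [inv_simple]
    exact step b hb ih i hy

theorem isLeftMinimal_of_forall_length_le (hK : K ⊆ Set.range cs.simple) {w : W}
    (hmin : ∀ a ∈ Subgroup.closure K, ℓ w ≤ ℓ (a * w)) : cs.IsLeftMinimal K w := by
  rw [← inv_inv w, isLeftMinimal_inv_iff]
  refine cs.isRightMinimal_of_forall_length_le hK fun b hb ↦ ?_
  rw [length_inv, ← cs.length_inv (w⁻¹ * b), mul_inv_rev, inv_inv]
  exact hmin _ (inv_mem hb)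

theorem isRightMinimal_iff (hK : K ⊆ Set.range cs.simple) {w : W} :
    cs.IsRightMinimal K w ↔ ∀ i, s i ∈ K → ¬cs.IsRightDescent w i := by
  refine ⟨fun h i hi ↦ ?_, fun h ↦ ?_⟩
  · rw [not_isRightDescent_iff, h _ (Subgroup.subset_closure hi), length_simple]
  obtain ⟨b, hb, hmin⟩ :
      ∃ b ∈ Subgroup.closure K, ∀ c ∈ Subgroup.closure K, ℓ (w * b) ≤ ℓ (w * c) :=
    ⟨_, Function.argminOn_mem (fun c ↦ ℓ (w * c)) _ ⟨1, one_mem _⟩,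
      fun c hc ↦ Function.argminOn_le (fun c ↦ ℓ (w * c)) _ hc⟩
  have hwb : cs.IsRightMinimal K (w * b) := cs.isRightMinimal_of_forall_length_le hK
    fun c hc ↦ by simpa only [mul_assoc] using hmin _ (mul_mem hb hc)
  obtain rfl : b = 1 := by
    by_contra hb1
    obtain ⟨i, hi, hdesc⟩ :=
      cs.exists_isRightDescent_of_mem_closure hK (inv_mem hb) (inv_ne_one.2 hb1)
    have h₁ := hwb _ (inv_mem hb)
    have h₂ := hwb _ (mul_mem (inv_mem hb) (Subgroup.subset_closure hi))
    rw [mul_inv_cancel_right] at h₁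
    rw [← mul_assoc, mul_inv_cancel_right] at h₂
    exact h i hi (by rw [IsRightDescent, h₁, h₂]; exact Nat.add_lt_add_left hdesc _)
  simpa using hwb

theorem isLeftMinimal_iff (hK : K ⊆ Set.range cs.simple) {w : W} :
    cs.IsLeftMinimal K w ↔ ∀ i, s i ∈ K → ¬cs.IsLeftDescent w i := by
  rw [← inv_inv w, isLeftMinimal_inv_iff, isRightMinimal_iff cs hK]
  simp only [isLeftDescent_inv_iff]

variable {cs} in
theorem IsRightMinimal.deodhar (hK : K ⊆ Set.range cs.simple) {d : W}
    (hd : cs.IsRightMinimal K d) (i : B) :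
    (∃ k, s k ∈ K ∧ s i * d = d * s k) ∨ cs.IsRightMinimal K (s i * d) := by
  rw [or_iff_not_imp_right, isRightMinimal_iff cs hK]
  push Not
  rintro ⟨k, hk, hdesc⟩
  rcases cs.isRightInversion_or_of_isRightInversion_mul
    ((cs.isRightInversion_simple_iff_isRightDescent _ k).2 hdesc) with h | h
  · have := hd _ (Subgroup.subset_closure hk)
    exact absurd h.2 (by rw [this]; omega)
  · have h₁ := h.2
    rw [length_simple, Nat.lt_one_iff, length_eq_zero_iff] at h₁
    refine ⟨k, hk, ?_⟩
    calc s i * d = s i * (d * s k * d⁻¹) * (d * s k) := by simp [mul_assoc]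
      _ = d * s k := by rw [h₁, one_mul]

variable {I : Set W}

-- If `a d b s_i < a d b`, the descent is absorbed by `b`, or by `a` through a right inversion of
-- `a`, which lies in `W_I`; it cannot be absorbed by `d ∈ W^K`.
theorem exists_mul_mul_eq_mul_simple (hI : I ⊆ Set.range cs.simple) {d a b : W}
    (hdK : cs.IsRightMinimal K d) (ha : a ∈ Subgroup.closure I) (hb : b ∈ Subgroup.closure K)
    (hlen : ℓ (a * d * b) = ℓ a + ℓ d + ℓ b) {i : B} (hi : s i ∈ K) :
    ∃ a' ∈ Subgroup.closure I, ∃ b' ∈ Subgroup.closure K,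
      a * d * b * s i = a' * d * b' ∧ ℓ (a * d * b * s i) = ℓ a' + ℓ d + ℓ b' := by
  have hbi : b * s i ∈ Subgroup.closure K := mul_mem hb (Subgroup.subset_closure hi)
  have hle₁ := cs.length_mul_le (a * d) (b * s i)
  have hle₂ := cs.length_mul_le a d
  rw [← mul_assoc] at hle₁
  rcases cs.length_mul_simple (a * d * b) i with hup | hdown
  · refine ⟨a, ha, b * s i, hbi, by rw [mul_assoc], ?_⟩
    have := cs.length_mul_simple b i
    omega
  have hinv : cs.IsRightInversion (a * (d * b)) (s i) :=
    ⟨cs.isReflection_simple i, by rw [← mul_assoc]; omega⟩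
  rcases cs.isRightInversion_or_of_isRightInversion_mul hinv with hdb | hat
  · rcases cs.isRightInversion_or_of_isRightInversion_mul hdb with hb' | hd'
    · refine ⟨a, ha, b * s i, hbi, by rw [mul_assoc], ?_⟩
      have := hb'.2
      have := cs.length_mul_simple b i
      omega
    · have := hdK _ (mul_mem hbi (inv_mem hb))
      have := hd'.2
      omega
  · have ht := cs.mem_closure_of_isRightInversion hI ha hat
    refine ⟨a * (d * b * s i * (d * b)⁻¹), mul_mem ha ht, b, hb, by group, ?_⟩
    have := hat.2
    have h₁ := cs.length_mul_le (a * (d * b * s i * (d * b)⁻¹) * d) b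
    have h₂ := cs.length_mul_le (a * (d * b * s i * (d * b)⁻¹)) d
    rw [show a * (d * b * s i * (d * b)⁻¹) * d * b = a * d * b * s i by group] at h₁
    omega

theorem exists_eq_mul_mul_of_mem_doubleCoset (hI : I ⊆ Set.range cs.simple)
    (hK : K ⊆ Set.range cs.simple) {d x : W} (hdI : cs.IsLeftMinimal I d)
    (hdK : cs.IsRightMinimal K d)
    (hx : x ∈ doubleCoset d (Subgroup.closure I) (Subgroup.closure K)) :
    ∃ a ∈ Subgroup.closure I, ∃ b ∈ Subgroup.closure K,
      x = a * d * b ∧ ℓ x = ℓ a + ℓ d + ℓ b := by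
  obtain ⟨a, ha, b, hb, rfl⟩ := mem_doubleCoset.1 hx
  clear hx
  have step (b : W) (i : B) (hi : s i ∈ K)
      (ih : ∃ a' ∈ Subgroup.closure I, ∃ b' ∈ Subgroup.closure K,
        a * d * b = a' * d * b' ∧ ℓ (a * d * b) = ℓ a' + ℓ d + ℓ b') :
      ∃ a' ∈ Subgroup.closure I, ∃ b' ∈ Subgroup.closure K,
        a * d * (b * s i) = a' * d * b' ∧ ℓ (a * d * (b * s i)) = ℓ a' + ℓ d + ℓ b' := by
    obtain ⟨a', ha', b', hb', heq, hlen⟩ := ih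
    rw [← mul_assoc, heq]
    exact cs.exists_mul_mul_eq_mul_simple hI hdK ha' hb' (heq ▸ hlen) hi
  induction hb using Subgroup.closure_induction_right with
  | one => exact ⟨a, ha, 1, one_mem _, rfl, by simp [hdI a ha]⟩
  | mul_right b _ y hy ih =>
    obtain ⟨i, rfl⟩ := hK hy
    exact step b i hy ih
  | mul_inv_cancel b _ y hy ih =>
    obtain ⟨i, rfl⟩ := hK hy
    rw [inv_simple]
    exact step b i hy ih

theorem exists_eq_mul_of_mem_doubleCoset (hI : I ⊆ Set.range cs.simple)
    (hK : K ⊆ Set.range cs.simple) {d x : W} (hdI : cs.IsLeftMinimal I d)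
    (hdK : cs.IsRightMinimal K d)
    (hx : x ∈ doubleCoset d (Subgroup.closure I) (Subgroup.closure K))
    (hxI : cs.IsLeftMinimal I x) : ∃ b ∈ Subgroup.closure K, x = d * b := by
  obtain ⟨a, ha, b, hb, rfl, hlen⟩ := cs.exists_eq_mul_mul_of_mem_doubleCoset hI hK hdI hdK hx
  have h₁ := hxI a⁻¹ (inv_mem ha)
  rw [show a⁻¹ * (a * d * b) = d * b by group, length_inv] at h₁
  have h₂ := cs.length_mul_le d b
  obtain rfl : a = 1 := cs.length_eq_zero_iff.1 (by omega)
  exact ⟨b, hb, by rw [one_mul]⟩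

theorem eq_of_mem_doubleCoset (hI : I ⊆ Set.range cs.simple) (hK : K ⊆ Set.range cs.simple)
    {d x : W} (hdI : cs.IsLeftMinimal I d) (hdK : cs.IsRightMinimal K d)
    (hx : x ∈ doubleCoset d (Subgroup.closure I) (Subgroup.closure K))
    (hxI : cs.IsLeftMinimal I x) (hxK : cs.IsRightMinimal K x) : x = d := by
  obtain ⟨b, hb, rfl⟩ := cs.exists_eq_mul_of_mem_doubleCoset hI hK hdI hdK hx hxI
  rw [hdK.eq_one_of_mul hxK hb, mul_one]

def minRep (I K : Set W) (u : W) : W :=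
  Function.argminOn cs.length (doubleCoset u (Subgroup.closure I) (Subgroup.closure K))
    ⟨u, mem_doubleCoset_self _ _ u⟩

section

variable {u : W}

theorem minRep_mem :
    cs.minRep I K u ∈ doubleCoset u (Subgroup.closure I) (Subgroup.closure K) :=
  Function.argminOn_mem _ _ _

theorem length_minRep_le {x : W}
    (hx : x ∈ doubleCoset u (Subgroup.closure I) (Subgroup.closure K)) :
    ℓ (cs.minRep I K u) ≤ ℓ x :=
  Function.argminOn_le _ _ hx

theorem doubleCoset_minRep :
    doubleCoset (cs.minRep I K u) (Subgroup.closure I) (Subgroup.closure K) =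
      doubleCoset u (Subgroup.closure I) (Subgroup.closure K) :=
  doubleCoset_eq_of_mem cs.minRep_mem

theorem isLeftMinimal_minRep (hI : I ⊆ Set.range cs.simple) :
    cs.IsLeftMinimal I (cs.minRep I K u) :=
  cs.isLeftMinimal_of_forall_length_le hI fun a ha ↦ cs.length_minRep_le <| by
    rw [← doubleCoset_minRep]
    exact mem_doubleCoset.2 ⟨a, ha, 1, one_mem _, by rw [mul_one]⟩

theorem isRightMinimal_minRep (hK : K ⊆ Set.range cs.simple) :
    cs.IsRightMinimal K (cs.minRep I K u) :=
  cs.isRightMinimal_of_forall_length_le hK fun b hb ↦ cs.length_minRep_le <| by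
    rw [← doubleCoset_minRep]
    exact mem_doubleCoset.2 ⟨1, one_mem _, b, hb, by rw [one_mul]⟩

end

variable (δ : W ≃* W) (J : Set W)

def bedardNext (K : Set W) (w : W) : Set W :=
  K ∩ ⇑δ.symm '' {x | ∃ r ∈ K, x = w * r * w⁻¹}

-- `bedardSets δ J u n` and `bedardElems δ J u n` are `J_n` and `w_n` for `w = u`.
def bedardSets (u : W) : ℕ → Set W
  | 0 => J
  | n + 1 => bedardNext δ (bedardSets u n) (cs.minRep (δ '' J) (bedardSets u n) u)

def bedardElems (u : W) (n : ℕ) : W := cs.minRep (δ '' J) (cs.bedardSets δ J u n) u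

variable {δ J}

theorem antitone_of_bedardNext {A : ℕ → Set W} {w : ℕ → W}
    (h : ∀ n, A (n + 1) = bedardNext δ (A n) (w n)) : Antitone A :=
  antitone_nat_of_succ_le fun n ↦ by rw [h n]; exact Set.inter_subset_left

theorem image_conj_eq_of_bedardNext_eq {K : Set W} {w : W} (hK : K.Finite)
    (h : bedardNext δ K w = K) : (fun r ↦ w * r * w⁻¹) '' K = δ '' K := by
  have hsub : δ '' K ⊆ (fun r ↦ w * r * w⁻¹) '' K := by
    rintro _ ⟨r, hr, rfl⟩
    rw [← h] at hr
    obtain ⟨x, ⟨r', hr', rfl⟩, hx⟩ := hr.2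
    exact ⟨r', hr', by rw [← hx, MulEquiv.apply_symm_apply]⟩
  refine (Set.eq_of_subset_of_ncard_le hsub ?_ (hK.image _)).symm
  rw [Set.ncard_image_of_injective _ δ.injective,
    Set.ncard_image_of_injective _ fun x y hxy ↦ mul_left_cancel (mul_right_cancel hxy)]

section

variable (u : W)

theorem doubleCoset_bedardElems (n : ℕ) :
    doubleCoset (cs.bedardElems δ J u n) (Subgroup.closure (δ '' J))
      (Subgroup.closure (cs.bedardSets δ J u n)) =
    doubleCoset u (Subgroup.closure (δ '' J)) (Subgroup.closure (cs.bedardSets δ J u n)) :=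
  cs.doubleCoset_minRep

theorem bedardSets_subset (n : ℕ) : cs.bedardSets δ J u n ⊆ J :=
  antitone_of_bedardNext (fun _ ↦ rfl) (Nat.zero_le n)

theorem bedardSets_bedardElems_mem_bedardT (hJ : J ⊆ Set.range cs.simple)
    (hδJ : δ '' J ⊆ Set.range cs.simple) :
    (cs.bedardSets δ J u, cs.bedardElems δ J u) ∈ bedardT cs δ J := by
  have hK (n : ℕ) : cs.bedardSets δ J u n ⊆ Set.range cs.simple :=
    (cs.bedardSets_subset u n).trans hJ
  refine ⟨rfl, fun n ↦ rfl, fun n ↦ ⟨?_, cs.isRightMinimal_minRep (hK n)⟩, fun n ↦ ?_⟩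
  · exact (cs.isLeftMinimal_minRep hδJ).mono (Set.image_mono (cs.bedardSets_subset u n))
  refine cs.exists_eq_mul_of_mem_doubleCoset hδJ (hK n) (cs.isLeftMinimal_minRep hδJ)
    (cs.isRightMinimal_minRep (hK n)) ?_ (cs.isLeftMinimal_minRep hδJ)
  obtain ⟨a, ha, b, hb, hab⟩ := mem_doubleCoset.1 (cs.minRep_mem (I := δ '' J)
    (K := cs.bedardSets δ J u (n + 1)) (u := u))
  change cs.bedardElems δ J u (n + 1) ∈ _
  rw [doubleCoset_bedardElems]
  exact mem_doubleCoset.2 ⟨a, ha, b, Subgroup.closure_mono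
    (antitone_of_bedardNext (fun _ ↦ rfl) n.le_succ) hb, hab⟩

theorem exists_forall_ge_bedardElems_eq (hJ : J ⊆ Set.range cs.simple) (hJfin : J.Finite)
    (hδJ : δ '' J ⊆ Set.range cs.simple) (hu : cs.IsLeftMinimal (δ '' J) u) :
    ∃ N, ∀ n ≥ N, cs.bedardElems δ J u n = u := by
  obtain ⟨N, hN⟩ := hJfin.exists_eq_of_antitone
    (antitone_of_bedardNext (A := cs.bedardSets δ J u) fun _ ↦ rfl)
  set K := cs.bedardSets δ J u N
  set w := cs.minRep (δ '' J) K u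
  have hK : K ⊆ Set.range cs.simple := (cs.bedardSets_subset u N).trans hJ
  have hwK : cs.IsRightMinimal K w := cs.isRightMinimal_minRep hK
  obtain ⟨b, hb, hub⟩ := cs.exists_eq_mul_of_mem_doubleCoset hδJ hK (cs.isLeftMinimal_minRep hδJ)
    hwK (by rw [doubleCoset_minRep]; exact mem_doubleCoset_self _ _ u) hu
  have hconj : w * b⁻¹ * w⁻¹ ∈ Subgroup.closure (δ '' J) := by
    have hfix : bedardNext δ K w = K := (hN (N + 1) N.le_succ).trans rfl
    refine Subgroup.closure_mono (Set.image_mono (cs.bedardSets_subset (δ := δ) u N)) ?_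
    rw [← image_conj_eq_of_bedardNext_eq (hJfin.subset (cs.bedardSets_subset u N)) hfix]
    have := Subgroup.mem_map_of_mem (MulAut.conj w).toMonoidHom (inv_mem hb)
    rwa [MonoidHom.map_closure] at this
  have h₁ := hu _ hconj
  rw [hub, show w * b⁻¹ * w⁻¹ * (w * b) = w by group, hwK b hb] at h₁
  obtain rfl : b = 1 := cs.length_eq_zero_iff.1 (by omega)
  refine ⟨N, fun n hn ↦ ?_⟩
  rw [mul_one] at hub
  rw [bedardElems, hN n hn, ← hub]

end

section bedardT

variable {p : (ℕ → Set W) × (ℕ → W)}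

theorem antitone_of_mem_bedardT (hp : p ∈ bedardT cs δ J) : Antitone p.1 :=
  antitone_of_bedardNext hp.2.1

theorem fst_subset_of_mem_bedardT (hp : p ∈ bedardT cs δ J) (n : ℕ) : p.1 n ⊆ J :=
  hp.1 ▸ cs.antitone_of_mem_bedardT hp (Nat.zero_le n)

theorem exists_eq_mul_of_mem_bedardT (hp : p ∈ bedardT cs δ J) {m n : ℕ} (hmn : m ≤ n) :
    ∃ c ∈ Subgroup.closure (p.1 m), p.2 n = p.2 m * c := by
  induction n, hmn using Nat.le_induction with
  | base => exact ⟨1, one_mem _, (mul_one _).symm⟩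
  | succ n hmn ih =>
    obtain ⟨c, hc, hceq⟩ := ih
    obtain ⟨b, hb, hbeq⟩ := hp.2.2.2 n
    exact ⟨c * b, mul_mem hc (Subgroup.closure_mono (cs.antitone_of_mem_bedardT hp hmn) hb),
      by rw [hbeq, hceq, mul_assoc]⟩

theorem exists_forall_ge_eq_of_mem_bedardT (hJ : J.Finite) (hp : p ∈ bedardT cs δ J) :
    ∃ N, ∀ n ≥ N, p.2 n = p.2 N := by
  have hA := cs.antitone_of_mem_bedardT hp
  obtain ⟨h0, -, hmin, hstep⟩ := hp
  obtain ⟨N, hN⟩ := (h0 ▸ hJ : (p.1 0).Finite).exists_eq_of_antitone hA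
  refine ⟨N, fun n hn ↦ ?_⟩
  induction n, hn using Nat.le_induction with
  | base => rfl
  | succ n hn ih =>
    obtain ⟨b, hb, hbeq⟩ := hstep n
    have hnext : cs.IsRightMinimal (p.1 n) (p.2 n * b) := by
      rw [← hbeq, hN n hn, ← hN (n + 1) (by omega)]
      exact (hmin (n + 1)).2
    rw [hbeq, IsRightMinimal.eq_one_of_mul (hmin n).2 hnext hb, mul_one, ih]

theorem isLeftMinimal_of_mem_bedardT (hJ : J ⊆ Set.range cs.simple)
    (hδJ : δ '' J ⊆ Set.range cs.simple) (hp : p ∈ bedardT cs δ J) {m n : ℕ} (hmn : m ≤ n) :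
    cs.IsLeftMinimal (δ '' p.1 m) (p.2 n) := by
  have hsub (k : ℕ) : p.1 k ⊆ J := cs.fst_subset_of_mem_bedardT hp k
  obtain ⟨-, hnext, hmin, -⟩ := id hp
  induction hmn using Nat.decreasingInduction with
  | self => exact (hmin n).1
  | of_succ m hmn ih =>
    rw [isLeftMinimal_iff cs ((Set.image_mono (hsub m)).trans hδJ)]
    rintro i ⟨r, hr, hri⟩
    rcases IsRightMinimal.deodhar ((hsub m).trans hJ) (hmin m).2 i with ⟨k, hk, hik⟩ | hsi
    · have hr' : r ∈ p.1 (m + 1) := by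
        rw [hnext]
        refine ⟨hr, s i, ⟨s k, hk, ?_⟩, by rw [← hri, MulEquiv.symm_apply_apply]⟩
        rw [← hik, mul_inv_cancel_right]
      exact (isLeftMinimal_iff cs ((Set.image_mono (hsub (m + 1))).trans hδJ)).1 ih i
        ⟨r, hr', hri⟩
    · obtain ⟨c, hc, hceq⟩ := cs.exists_eq_mul_of_mem_bedardT hp hmn.le
      have hasc := (hmin m).1 (s i) (Subgroup.subset_closure ⟨r, hr, hri⟩)
      rw [length_simple] at hasc
      rw [not_isLeftDescent_iff, hceq, ← mul_assoc, hsi c hc, hasc, (hmin m).2 c hc]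
      omega

theorem eq_bedardSets_bedardElems_of_mem_bedardT (hJ : J ⊆ Set.range cs.simple)
    (hδJ : δ '' J ⊆ Set.range cs.simple) (hp : p ∈ bedardT cs δ J) {N : ℕ}
    (hN : ∀ n ≥ N, p.2 n = p.2 N) :
    p = (cs.bedardSets δ J (p.2 N), cs.bedardElems δ J (p.2 N)) := by
  set u := p.2 N
  have hsub (k : ℕ) : p.1 k ⊆ J := cs.fst_subset_of_mem_bedardT hp k
  obtain ⟨h0, hnext, hmin, -⟩ := id hp
  have helems (n : ℕ) (hn : p.1 n = cs.bedardSets δ J u n) : p.2 n = cs.bedardElems δ J u n := by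
    have hK : cs.bedardSets δ J u n ⊆ Set.range cs.simple := hn ▸ (hsub n).trans hJ
    obtain ⟨c, hc, hu⟩ : ∃ c ∈ Subgroup.closure (p.1 n), u = p.2 n * c := by
      rcases le_total n N with h | h
      · exact cs.exists_eq_mul_of_mem_bedardT hp h
      · exact ⟨1, one_mem _, by rw [hN n h, mul_one]⟩
    refine cs.eq_of_mem_doubleCoset hδJ hK (cs.isLeftMinimal_minRep hδJ)
      (cs.isRightMinimal_minRep hK) ?_ ?_ (hn ▸ (hmin n).2)
    · rw [doubleCoset_bedardElems]
      exact mem_doubleCoset.2 ⟨1, one_mem _, c⁻¹, hn ▸ inv_mem hc, by rw [hu]; group⟩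
    · simpa only [h0] using cs.isLeftMinimal_of_mem_bedardT hJ hδJ hp (Nat.zero_le n)
  have hsets (n : ℕ) : p.1 n = cs.bedardSets δ J u n := by
    induction n with
    | zero => exact h0
    | succ n ih => rw [hnext n, ih, helems n ih]; rfl
  exact Prod.ext (funext hsets) (funext fun n ↦ helems n (hsets n))

end bedardT

end CoxeterSystem

end

open CoxeterSystem DoubleCoset in
theorem bedard_bijection
    {B W : Type*} [Finite B] [Group W] {M : CoxeterMatrix B}
    (cs : CoxeterSystem M W) (δ : W ≃* W)
    (hδ : ⇑δ '' Set.range cs.simple = Set.range cs.simple)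
    (J : Set W) (hJ : J ⊆ Set.range cs.simple) :
    -- every element of `T(J,δ)` has eventually constant sequence `(w'_n)`
    (∀ p ∈ bedardT cs δ J, ∃ N : ℕ, ∀ n ≥ N, p.2 n = p.2 N) ∧
    -- and the map `κ` sending `w` to its Bédard sequences is a bijection onto `T(J,δ)`
    -- whose inverse sends a pair of sequences to the stable value of `(w'_n)`
    ∃ κ : {u : W // ∀ a ∈ Subgroup.closure (⇑δ '' J),
        cs.length (a * u) = cs.length a + cs.length u} →
      {p : (ℕ → Set W) × (ℕ → W) // p ∈ bedardT cs δ J},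
      Function.Bijective κ ∧
      (∀ u, ∀ n : ℕ,
        (κ u).1.2 n ∈ {x : W | ∃ a ∈ Subgroup.closure (⇑δ '' J),
          ∃ b ∈ Subgroup.closure ((κ u).1.1 n), x = a * (u : W) * b} ∧
        ∀ x ∈ {x : W | ∃ a ∈ Subgroup.closure (⇑δ '' J),
          ∃ b ∈ Subgroup.closure ((κ u).1.1 n), x = a * (u : W) * b},
          cs.length ((κ u).1.2 n) ≤ cs.length x) ∧
      (∀ u, ∃ N : ℕ, ∀ n ≥ N, (κ u).1.2 n = (u : W)) := by
  have hδJ : δ '' J ⊆ Set.range cs.simple := hδ ▸ Set.image_mono hJ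
  have hJfin : J.Finite := (Set.finite_range cs.simple).subset hJ
  refine ⟨fun p hp ↦ cs.exists_forall_ge_eq_of_mem_bedardT hJfin hp,
    fun u ↦ ⟨(cs.bedardSets δ J u, cs.bedardElems δ J u),
      cs.bedardSets_bedardElems_mem_bedardT u hJ hδJ⟩, ⟨?_, ?_⟩, ?_, ?_⟩
  · intro u v huv
    obtain ⟨N₁, hN₁⟩ := cs.exists_forall_ge_bedardElems_eq u hJ hJfin hδJ u.2
    obtain ⟨N₂, hN₂⟩ := cs.exists_forall_ge_bedardElems_eq v hJ hJfin hδJ v.2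
    have := congrArg (fun q ↦ q.1.2 (max N₁ N₂)) huv
    simp only [hN₁ _ (le_max_left _ _), hN₂ _ (le_max_right _ _)] at this
    exact Subtype.ext this
  · rintro ⟨p, hp⟩
    obtain ⟨N, hN⟩ := cs.exists_forall_ge_eq_of_mem_bedardT hJfin hp
    refine ⟨⟨p.2 N, ?_⟩,
      Subtype.ext (cs.eq_bedardSets_bedardElems_of_mem_bedardT hJ hδJ hp hN).symm⟩
    have := cs.isLeftMinimal_of_mem_bedardT hJ hδJ hp (Nat.zero_le N)
    rwa [hp.1] at this
  · exact fun u n ↦ ⟨mem_doubleCoset.1 cs.minRep_mem,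
      fun x hx ↦ cs.length_minRep_le (mem_doubleCoset.2 hx)⟩
  · exact fun u ↦ cs.exists_forall_ge_bedardElems_eq u hJ hJfin hδJ u.2
end
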